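/- arXiv:1707.01224 — 2 statements merged into one kernel-verified Lean document; each statement's English description precedes it below -/
import Mathlib

section
/- Let T be an infinite locally finite tree rooted at r and λ > br T, where br T is the branching number of T. Then T satisfies f_n-containment with f_n = ⌊λ^n⌋. Consequently λ_c(T) ≤ br T. -/
open scoped ENNReal NNReal

namespace Firefight

variable {V : Type*}

/-- Vertices protected before round `n+1`'s spread: the strategy `s` plays `s n` in round `n+1`. -/
def protSet (s : ℕ → Set V) : ℕ → Set V
  | 0 => ∅
  | n + 1 => protSet s n ∪ s n

/-- Burning vertices after `n` rounds. -/
def burnSet (G : SimpleGraph V) (X₀ : Set V) (s : ℕ → Set V) : ℕ → Set V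
  | 0 => X₀
  | n + 1 => burnSet G X₀ s n ∪
      {v | v ∉ protSet s (n + 1) ∧ ∃ u ∈ burnSet G X₀ s n, G.Adj u v}

/-- A strategy is valid for the budget sequence `f` if in round `n+1` it protects at most
`f (n+1)` vertices, none of which is already burning. -/
def ValidStrategy (G : SimpleGraph V) (f : ℕ → ℕ) (X₀ : Set V) (s : ℕ → Set V) : Prop :=
  ∀ n, (s n).Finite ∧ (s n).ncard ≤ f (n + 1) ∧ Disjoint (s n) (burnSet G X₀ s n)

/-- The fire is contained: only finitely many vertices ever burn. -/
def ContainsFire (G : SimpleGraph V) (X₀ : Set V) (s : ℕ → Set V) : Prop :=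
  (⋃ n, burnSet G X₀ s n).Finite

/-- `G` satisfies `f_n`-containment. -/
def Containment (G : SimpleGraph V) (f : ℕ → ℕ) : Prop :=
  ∀ X₀ : Set V, X₀.Finite → ∃ s, ValidStrategy G f X₀ s ∧ ContainsFire G X₀ s

/-- Exponential containment of rate `lam`: `f_n`-containment for some `f_n = O(lam ^ n)`. -/
def ExpContainment (G : SimpleGraph V) (lam : ℝ≥0∞) : Prop :=
  ∃ f : ℕ → ℕ, (∃ c : ℝ≥0, ∀ n, (f n : ℝ≥0∞) ≤ c * lam ^ n) ∧ Containment G f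

/-- The critical exponential containment rate. -/
noncomputable def lambdaC (G : SimpleGraph V) : ℝ≥0∞ :=
  sInf {lam | ExpContainment G lam}

/-- A set of edges whose removal leaves the root `r` in a finite component. -/
def IsCutset (G : SimpleGraph V) (r : V) (Cut : Set (Sym2 V)) : Prop :=
  Cut ⊆ G.edgeSet ∧ {v | (G.deleteEdges Cut).Reachable r v}.Finite

/-- The distance `|e|` of an edge from the root: the distance to its farther endpoint. -/
noncomputable def edgeDist (G : SimpleGraph V) (r : V) (e : Sym2 V) : ℕ :=
  Sym2.lift ⟨fun a b => max (G.dist r a) (G.dist r b), fun a b => max_comm _ _⟩ e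

/-- `∑_{e ∈ Cut} lam ^ {-|e|}`. -/
noncomputable def cutsetWeight (G : SimpleGraph V) (r : V) (lam : ℝ≥0∞)
    (Cut : Set (Sym2 V)) : ℝ≥0∞ :=
  ∑' e : Cut, (lam ^ edgeDist G r (e : Sym2 V))⁻¹

/-- The branching number of a tree rooted at `r`. -/
noncomputable def branchingNumber (G : SimpleGraph V) (r : V) : ℝ≥0∞ :=
  sSup {lam : ℝ≥0∞ | ∃ ε : ℝ≥0∞, 0 < ε ∧ ∀ Cut, IsCutset G r Cut → ε ≤ cutsetWeight G r lam Cut}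

/-- The ball of radius `k` about `r`. -/
def ball (G : SimpleGraph V) (r : V) (k : ℕ) : Set V :=
  {v | G.dist r v ≤ k}

end Firefight

open Firefight

/-! Let the initial fire lie in the ball of radius `R` about the root and `br T < λ`. Choose a
cutset `Π` with `w := ∑_{e ∈ Π} λ^{-|e|} < 1 / (2 λ^{R+2})`. A single edge of `Π` contributes at
least `λ^{-|e|}`, so all of `Π` lies beyond distance `R + 1`, and at most `w λ^d` edges of `Π` have
`|e| ≤ d`. In round `n + 1` protect the endpoints of cut edges at distance `R + 1 + n` from the
root. After `n` rounds the fire is within distance `R + n`, so every endpoint is protected before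
the fire can reach it, the fire never crosses `Π`, and it stays in the finite component of the
root. Round `n + 1` costs at most `2 w λ^{R+n+2} ≤ λ^n` vertices. -/

namespace Sym2

variable {α : Type*}

lemma finite_coe (e : Sym2 α) : (e : Set α).Finite :=
  e.inductionOn fun _ _ => by simp

lemma ncard_coe_le_two (e : Sym2 α) : (e : Set α).ncard ≤ 2 := by
  induction e using Sym2.inductionOn with
  | hf a b => simpa using Set.ncard_insert_le a {b}

lemma ncard_biUnion_coe_le {E : Set (Sym2 α)} (hE : E.Finite) :
    (⋃ e ∈ E, (e : Set α)).ncard ≤ 2 * E.ncard := by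
  calc (⋃ e ∈ E, (e : Set α)).ncard = (⋃ e ∈ hE.toFinset, (e : Set α)).ncard := by simp
    _ ≤ ∑ e ∈ hE.toFinset, (e : Set α).ncard := Finset.set_ncard_biUnion_le _ _
    _ ≤ hE.toFinset.card • 2 := Finset.sum_le_card_nsmul _ _ _ fun e _ => ncard_coe_le_two e
    _ = 2 * E.ncard := by rw [Set.ncard_eq_toFinset_card _ hE, smul_eq_mul, mul_comm]

end Sym2

namespace SimpleGraph

variable {V : Type*} {G : SimpleGraph V} {r u v : V}

lemma dist_le_dist_add_one_of_adj (h : G.Adj u v) : G.dist r v ≤ G.dist r u + 1 := by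
  have := h.diff_dist_adj (u := r)
  omega

lemma exists_adj_dist_add_one_eq (h : G.dist r v ≠ 0) :
    ∃ u, G.Adj u v ∧ G.dist r u + 1 = G.dist r v := by
  obtain ⟨p, hp⟩ := exists_walk_of_dist_ne_zero h
  have hnil : ¬p.Nil := fun hn => h (by rw [← hp, hn.length_eq_zero])
  refine ⟨p.penultimate, p.adj_penultimate hnil,
    le_antisymm ?_ (dist_le_dist_add_one_of_adj (p.adj_penultimate hnil))⟩
  have := dist_le p.dropLast
  have := p.length_dropLast_add_one hnil
  omega

end SimpleGraph

namespace Firefight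

open SimpleGraph

variable {V : Type*} {G : SimpleGraph V} {r : V}

@[simp]
lemma edgeDist_mk (a b : V) : edgeDist G r s(a, b) = max (G.dist r a) (G.dist r b) := rfl

lemma edgeDist_le_dist_add_one {e : Sym2 V} {v : V} (he : e ∈ G.edgeSet) (hv : v ∈ e) :
    edgeDist G r e ≤ G.dist r v + 1 := by
  induction e using Sym2.inductionOn with
  | hf a b =>
    rw [mem_edgeSet] at he
    have hab := dist_le_dist_add_one_of_adj (r := r) he
    have hba := dist_le_dist_add_one_of_adj (r := r) (G.adj_symm he)
    rcases Sym2.mem_iff.1 hv with rfl | rfl <;> simp only [edgeDist_mk] <;> omega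

lemma reachable_deleteEdges_of_dist_le (hc : G.Connected) {Cut : Set (Sym2 V)}
    {m : ℕ} (hCut : ∀ e ∈ Cut, m < edgeDist G r e) {v : V} (hv : G.dist r v ≤ m) :
    (G.deleteEdges Cut).Reachable r v := by
  induction hd : G.dist r v generalizing v with
  | zero => rw [hc.dist_eq_zero_iff.1 hd]
  | succ k ih =>
    obtain ⟨u, hadj, hu⟩ := exists_adj_dist_add_one_eq (G := G) (r := r) (v := v) (by omega)
    have hnot : s(u, v) ∉ Cut := fun he => by
      have := hCut _ he
      simp only [edgeDist_mk] at this
      omega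
    exact (ih (by omega) (by omega)).trans (deleteEdges_adj.2 ⟨hadj, hnot⟩).reachable

lemma one_le_branchingNumber [Infinite V] (hc : G.Connected) (r : V) :
    1 ≤ branchingNumber G r := by
  refine le_sSup ⟨1, one_pos, fun Cut hCut => ?_⟩
  obtain ⟨e, he⟩ : Cut.Nonempty := by
    rw [Set.nonempty_iff_ne_empty]
    rintro rfl
    have huniv : {v | (G.deleteEdges ∅).Reachable r v} = Set.univ := by
      ext v
      simp [hc.preconnected r v]
    exact Set.infinite_univ (huniv ▸ hCut.2)
  simpa [cutsetWeight] using ENNReal.le_tsum (f := fun e : Cut => (1 : ℝ≥0∞)) ⟨e, he⟩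

lemma exists_isCutset_cutsetWeight_lt {L ε : ℝ≥0∞} (hL : branchingNumber G r < L)
    (hε : 0 < ε) : ∃ Cut, IsCutset G r Cut ∧ cutsetWeight G r L Cut < ε := by
  by_contra! h
  exact not_le.2 hL (le_sSup ⟨ε, hε, h⟩)

lemma pow_edgeDist_inv_le_cutsetWeight {L : ℝ≥0∞} {Cut : Set (Sym2 V)} {e : Sym2 V}
    (he : e ∈ Cut) : (L ^ edgeDist G r e)⁻¹ ≤ cutsetWeight G r L Cut :=
  ENNReal.le_tsum (f := fun e : Cut => (L ^ edgeDist G r (e : Sym2 V))⁻¹) ⟨e, he⟩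

lemma lt_edgeDist_of_cutsetWeight_mul_lt_one {L : ℝ≥0∞} (hL : 1 ≤ L) (hLtop : L ≠ ⊤)
    {Cut : Set (Sym2 V)} {d : ℕ} (hw : cutsetWeight G r L Cut * L ^ d < 1) {e : Sym2 V}
    (he : e ∈ Cut) : d < edgeDist G r e := by
  by_contra! hle
  refine hw.not_ge ?_
  calc 1 = (L ^ d)⁻¹ * L ^ d :=
        (ENNReal.inv_mul_cancel (pow_ne_zero _ (one_pos.trans_le hL).ne')
          (ENNReal.pow_ne_top hLtop)).symm
    _ ≤ (L ^ edgeDist G r e)⁻¹ * L ^ d := by gcongr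
    _ ≤ cutsetWeight G r L Cut * L ^ d := by gcongr; exact pow_edgeDist_inv_le_cutsetWeight he

lemma finite_and_ncard_le_cutsetWeight_mul {L : ℝ≥0∞} (hL : 1 ≤ L) (hLtop : L ≠ ⊤)
    {Cut : Set (Sym2 V)} (hw : cutsetWeight G r L Cut ≠ ⊤) (d : ℕ) :
    {e ∈ Cut | edgeDist G r e ≤ d}.Finite ∧
      ({e ∈ Cut | edgeDist G r e ≤ d}.ncard : ℝ≥0∞) ≤ cutsetWeight G r L Cut * L ^ d := by
  obtain ⟨hf, hcard⟩ := ENNReal.finset_card_const_le_le_of_tsum_le hw le_rfl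
    (ε := (L ^ d)⁻¹) (ENNReal.inv_ne_zero.2 (ENNReal.pow_ne_top hLtop))
  have hsub : {e ∈ Cut | edgeDist G r e ≤ d} ⊆ Subtype.val ''
      {e : Cut | (L ^ d)⁻¹ ≤ (L ^ edgeDist G r (e : Sym2 V))⁻¹} := by
    rintro e ⟨he, hd⟩
    exact ⟨⟨e, he⟩, ENNReal.inv_le_inv.2 (pow_le_pow_right₀ hL hd), rfl⟩
  refine ⟨(hf.image _).subset hsub, ?_⟩
  calc ({e ∈ Cut | edgeDist G r e ≤ d}.ncard : ℝ≥0∞)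
      ≤ hf.toFinset.card := by
        rw [← Set.ncard_eq_toFinset_card _ hf,
          ← Set.ncard_image_of_injective _ Subtype.val_injective]
        exact_mod_cast Set.ncard_le_ncard hsub (hf.image _)
    _ ≤ cutsetWeight G r L Cut / (L ^ d)⁻¹ := hcard
    _ = cutsetWeight G r L Cut * L ^ d := by rw [div_eq_mul_inv, inv_inv]

lemma protSet_mono (s : ℕ → Set V) : Monotone (protSet s) :=
  monotone_nat_of_le_succ fun _ => Set.subset_union_left

lemma burnSet_subset_ball {X₀ : Set V} {R : ℕ} (hX₀ : X₀ ⊆ ball G r R) (s : ℕ → Set V)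
    (n : ℕ) : burnSet G X₀ s n ⊆ ball G r (R + n) := by
  induction n with
  | zero => exact hX₀
  | succ n ih =>
    rintro v (hv | ⟨-, u, hu, hadj⟩)
    · have : G.dist r v ≤ R + n := ih hv
      show G.dist r v ≤ R + (n + 1)
      omega
    · have : G.dist r u ≤ R + n := ih hu
      have := dist_le_dist_add_one_of_adj (r := r) hadj
      show G.dist r v ≤ R + (n + 1)
      omega

def cutStrategy (G : SimpleGraph V) (r : V) (Cut : Set (Sym2 V)) (D n : ℕ) : Set V :=
  {v | G.dist r v = D + n} ∩ ⋃ e ∈ Cut, (e : Set V)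

variable {Cut : Set (Sym2 V)} {X₀ : Set V} {R : ℕ}

lemma cutStrategy_subset_biUnion (hCut : Cut ⊆ G.edgeSet) (D n : ℕ) :
    cutStrategy G r Cut D n ⊆ ⋃ e ∈ {e ∈ Cut | edgeDist G r e ≤ D + n + 1}, (e : Set V) := by
  rintro v ⟨hv, he⟩
  obtain ⟨e, he, hve⟩ := Set.mem_iUnion₂.1 he
  have := edgeDist_le_dist_add_one (r := r) (hCut he) hve
  have hv : G.dist r v = D + n := hv
  exact Set.mem_iUnion₂.2 ⟨e, ⟨he, by omega⟩, hve⟩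

lemma burnSet_cutStrategy_subset_reachable (hc : G.Connected)
    (hfar : ∀ e ∈ Cut, R + 1 < edgeDist G r e) (hX₀ : X₀ ⊆ ball G r R) (n : ℕ) :
    burnSet G X₀ (cutStrategy G r Cut (R + 1)) n ⊆ {v | (G.deleteEdges Cut).Reachable r v} := by
  induction n with
  | zero => exact fun v hv =>
      reachable_deleteEdges_of_dist_le hc (fun e he => by have := hfar e he; omega) (hX₀ hv)
  | succ n ih =>
    rintro v (hv | ⟨hnp, u, hu, hadj⟩)
    · exact ih hv
    by_cases he : s(u, v) ∈ Cut
    · have hu : G.dist r u ≤ R + n := burnSet_subset_ball hX₀ _ n hu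
      have huv := dist_le_dist_add_one_of_adj (r := r) hadj
      have hvu := dist_le_dist_add_one_of_adj (r := r) (G.adj_symm hadj)
      have hfar := hfar _ he
      simp only [edgeDist_mk] at hfar
      have hprot : v ∈ cutStrategy G r Cut (R + 1) (G.dist r v - (R + 1)) :=
        ⟨by show _ = _; omega, Set.mem_iUnion₂.2 ⟨_, he, Sym2.mem_mk_right u v⟩⟩
      exact absurd (protSet_mono _ (by omega : G.dist r v - (R + 1) + 1 ≤ n + 1)
        (Set.subset_union_right hprot)) hnp
    · exact (ih hu).trans (deleteEdges_adj.2 ⟨hadj, he⟩).reachable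

lemma validStrategy_cutStrategy {lam : ℝ} (hlam : 1 ≤ lam) (hCut : Cut ⊆ G.edgeSet)
    (hX₀ : X₀ ⊆ ball G r R)
    (hw : cutsetWeight G r (ENNReal.ofReal lam) Cut * (2 * ENNReal.ofReal lam ^ (R + 2)) ≤ 1) :
    ValidStrategy G (fun n => ⌊lam ^ n⌋₊) X₀ (cutStrategy G r Cut (R + 1)) := by
  set L := ENNReal.ofReal lam
  set w := cutsetWeight G r L Cut
  have hL : 1 ≤ L := ENNReal.one_le_ofReal.2 hlam
  have hwtop : w ≠ ⊤ := ne_top_of_le_ne_top ENNReal.one_ne_top <|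
    (le_mul_of_one_le_right' (one_le_two.trans (le_mul_of_one_le_right' (one_le_pow₀ hL)))).trans hw
  intro n
  obtain ⟨hfin, hcard⟩ :=
    finite_and_ncard_le_cutsetWeight_mul hL ENNReal.ofReal_ne_top hwtop (R + 1 + n + 1)
  have hsub := cutStrategy_subset_biUnion (r := r) hCut (R + 1) n
  have hfin' := hfin.biUnion fun e _ => e.finite_coe
  have hcount : ((cutStrategy G r Cut (R + 1) n).ncard : ℝ≥0∞) ≤ L ^ n := calc
    _ ≤ ((2 * {e ∈ Cut | edgeDist G r e ≤ R + 1 + n + 1}.ncard : ℕ) : ℝ≥0∞) := by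
        exact_mod_cast (Set.ncard_le_ncard hsub hfin').trans (Sym2.ncard_biUnion_coe_le hfin)
    _ ≤ 2 * (w * L ^ (R + 1 + n + 1)) := by push_cast; gcongr
    _ = w * (2 * L ^ (R + 2)) * L ^ n := by ring
    _ ≤ L ^ n := mul_le_of_le_one_left' hw
  refine ⟨hfin'.subset hsub, Nat.le_floor ?_, Set.disjoint_left.2 fun v hv hb => ?_⟩
  · rw [← ENNReal.ofReal_pow (by linarith), ← ENNReal.ofReal_natCast,
      ENNReal.ofReal_le_ofReal_iff (by positivity)] at hcount
    exact hcount.trans (pow_le_pow_right₀ hlam n.le_succ)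
  · have h1 : G.dist r v = R + 1 + n := hv.1
    have h2 : G.dist r v ≤ R + n := burnSet_subset_ball hX₀ _ n hb
    omega

theorem containment_floor_pow (hc : G.Connected) {lam : ℝ} (hlam : 1 ≤ lam)
    (hbr : branchingNumber G r < ENNReal.ofReal lam) : Containment G fun n => ⌊lam ^ n⌋₊ := by
  intro X₀ hX₀
  obtain ⟨R, hR⟩ : ∃ R, X₀ ⊆ ball G r R := by
    obtain ⟨R, hR⟩ := (hX₀.image (G.dist r)).bddAbove
    exact ⟨R, fun v hv => hR ⟨v, hv, rfl⟩⟩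
  set L := ENNReal.ofReal lam
  have hL : 1 ≤ L := ENNReal.one_le_ofReal.2 hlam
  obtain ⟨Cut, hCut, hw⟩ := exists_isCutset_cutsetWeight_lt hbr
    (ENNReal.div_pos one_ne_zero (b := 2 * L ^ (R + 2)) (by finiteness))
  replace hw := ENNReal.mul_lt_of_lt_div hw
  have hfar (e) (he : e ∈ Cut) : R + 1 < edgeDist G r e := by
    refine lt_edgeDist_of_cutsetWeight_mul_lt_one hL ENNReal.ofReal_ne_top (hw.trans_le' ?_) he
    gcongr
    exact (pow_le_pow_right₀ hL (by omega)).trans (le_mul_of_one_le_left' one_le_two)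
  exact ⟨_, validStrategy_cutStrategy hlam hCut.1 hR hw.le,
    hCut.2.subset (Set.iUnion_subset (burnSet_cutStrategy_subset_reachable hc hfar hR))⟩

lemma expContainment_of_containment_floor {y : ℝ≥0∞} (hy : y ≠ ⊤)
    (h : Containment G fun n => ⌊y.toReal ^ n⌋₊) : ExpContainment G y := by
  refine ⟨_, ⟨1, fun n => ?_⟩, h⟩
  calc ((⌊y.toReal ^ n⌋₊ : ℕ) : ℝ≥0∞) ≤ ENNReal.ofReal (y.toReal ^ n) := by
        rw [← ENNReal.ofReal_natCast]
        exact ENNReal.ofReal_le_ofReal (Nat.floor_le (by positivity))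
    _ = ((1 : ℝ≥0) : ℝ≥0∞) * y ^ n := by
        rw [ENNReal.ofReal_pow ENNReal.toReal_nonneg, ENNReal.ofReal_toReal hy, ENNReal.coe_one,
          one_mul]

end Firefight

theorem stmt_6_general {V : Type*} (T : SimpleGraph V) [Infinite V] (ht : T.IsTree) (r : V) :
    (∀ lam : ℝ, branchingNumber T r < ENNReal.ofReal lam →
      Containment T (fun n => ⌊lam ^ n⌋₊)) ∧
    lambdaC T ≤ branchingNumber T r := by
  have hc : T.Connected := ht.connected
  have hbr : 1 ≤ branchingNumber T r := one_le_branchingNumber hc r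
  have hcont (lam : ℝ) (h : branchingNumber T r < ENNReal.ofReal lam) :
      Containment T (fun n => ⌊lam ^ n⌋₊) :=
    containment_floor_pow hc (ENNReal.one_le_ofReal.1 (hbr.trans h.le)) h
  refine ⟨hcont, le_of_forall_gt_imp_ge_of_dense fun x hx => ?_⟩
  obtain ⟨y, hby, hyx⟩ := exists_between hx
  have hy : y ≠ ⊤ := hyx.ne_top
  calc lambdaC T ≤ y := sInf_le <| expContainment_of_containment_floor hy <|
        hcont _ (by rwa [ENNReal.ofReal_toReal hy])
    _ ≤ x := hyx.le

/-- for `lam` above the branching number, a tree satisfies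
`⌊lam^n⌋`-containment; consequently `λ_c ≤ br T`. -/
theorem stmt_6 {V : Type*} (T : SimpleGraph V) [Infinite V] (hlf : T.LocallyFinite)
    (ht : T.IsTree) (r : V) :
    (∀ lam : ℝ, branchingNumber T r < ENNReal.ofReal lam →
      Containment T (fun n => ⌊lam ^ n⌋₊)) ∧
    lambdaC T ≤ branchingNumber T r :=
  stmt_6_general T ht r
end

section
/- Let T be a locally finite tree rooted at r and let s(V') be a successful containment strategy for the initial fire B_r(k) with protection sequence (f_n), where V' is a finite vertex set each of whose elements is protected before it burns. Then the set Π of parent edges of vertices of V' is a cutset separating r from infinity, and for each n, |{v ∈ V' : |v| = n}| ≤ Σ_{i=1}^{n−k} f_i. -/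
open scoped ENNReal NNReal

open Firefight

/-!
Inside the tree cut along the parent edges `Π` of `V'`, no vertex of `V'` is reachable from `r`,
since a parent edge is a bridge. Hence no vertex of the component of `r` is ever protected, and
by induction on `|v|` each of its vertices `v` burns by round `|v| - k`; as the fire is contained,
that component is finite. For the counting bound, a vertex of `V'` at distance `n` from `r` is
protected in some round `m + 1` with `k + m < n`, so it lies among the at most
`f 1 + ⋯ + f (n - k)` vertices protected in the first `n - k` rounds.
-/

namespace Firefight

open SimpleGraph

variable {V : Type*}

section Protection

variable {s : ℕ → Set V}

lemma mem_protSet {v : V} : ∀ {n : ℕ}, v ∈ protSet s n ↔ ∃ m < n, v ∈ s m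
  | 0 => by simp [protSet]
  | n + 1 => by
      simp only [protSet, Set.mem_union, mem_protSet, Nat.lt_succ_iff_lt_or_eq]
      grind

lemma finite_protSet (hs : ∀ n, (s n).Finite) : ∀ n, (protSet s n).Finite
  | 0 => Set.finite_empty
  | n + 1 => (finite_protSet hs n).union (hs n)

lemma ncard_protSet_le {G : SimpleGraph V} {f : ℕ → ℕ} {X₀ : Set V}
    (hval : ValidStrategy G f X₀ s) : ∀ n, (protSet s n).ncard ≤ ∑ i ∈ Finset.Icc 1 n, f i
  | 0 => by simp [protSet]
  | n + 1 => calc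
      (protSet s n ∪ s n).ncard ≤ (protSet s n).ncard + (s n).ncard := Set.ncard_union_le _ _
      _ ≤ ∑ i ∈ Finset.Icc 1 n, f i + f (n + 1) := add_le_add (ncard_protSet_le hval n) (hval n).2.1
      _ = ∑ i ∈ Finset.Icc 1 (n + 1), f i := (Finset.sum_Icc_succ_top (by omega) f).symm

end Protection

section Distance

variable {G : SimpleGraph V} {r u v : V}

lemma exists_adj_dist_eq_of_dist_eq_succ (hG : G.Connected) {n : ℕ} (h : G.dist r v = n + 1) :
    ∃ u, G.Adj u v ∧ G.dist r u = n := by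
  obtain ⟨p, hp⟩ := hG.exists_walk_length_eq_dist r v
  have hnil : ¬ p.Nil := by rw [← Walk.length_eq_zero_iff]; omega
  refine ⟨p.penultimate, p.adj_penultimate hnil, le_antisymm ?_ ?_⟩
  · simpa [Walk.length_dropLast, hp, h] using dist_le p.dropLast
  · have := (p.adj_penultimate hnil).reachable.dist_triangle_right r
    simp only [dist_eq_one_iff_adj.mpr (p.adj_penultimate hnil)] at this
    omega

/-- A geodesic from `r` to `u` stays at distance at most `G.dist r u` from `r`, so it avoids `v`. -/
lemma reachable_deleteEdges_of_dist_lt (hG : G.Connected) (h : G.dist r u < G.dist r v) :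
    (G.deleteEdges {s(u, v)}).Reachable r u := by
  classical
  obtain ⟨p, hp⟩ := hG.exists_walk_length_eq_dist r u
  have hv : v ∉ p.support := fun hv => by
    have := dist_le (p.takeUntil v hv)
    have := p.length_takeUntil_le_length hv
    omega
  refine ⟨p.toDeleteEdges _ fun e he he' => hv ?_⟩
  rw [Set.mem_singleton_iff] at he'
  subst he'
  exact p.snd_mem_support_of_mem_edges he

end Distance

/-- For `S = V'` this is the paper's `Π`. -/
def parentEdges (G : SimpleGraph V) (r : V) (S : Set V) : Set (Sym2 V) :=
  {e | ∃ v ∈ S, ∃ u, G.Adj u v ∧ G.dist r u + 1 = G.dist r v ∧ e = s(u, v)}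

section ParentEdges

variable {G : SimpleGraph V} {r : V} {S : Set V}

lemma parentEdges_subset_edgeSet : parentEdges G r S ⊆ G.edgeSet := by
  rintro e ⟨v, -, u, hadj, -, rfl⟩
  exact hadj

lemma mem_of_mk_mem_parentEdges {u v : V} (h : s(u, v) ∈ parentEdges G r S)
    (hd : G.dist r u + 1 = G.dist r v) : v ∈ S := by
  obtain ⟨w, hw, x, -, hx, he⟩ := h
  rcases Sym2.eq_iff.mp he with ⟨-, rfl⟩ | ⟨rfl, rfl⟩
  · exact hw
  · omega

/-- The parent edge of `v` is a bridge whose near side contains `r`. -/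
lemma not_reachable_deleteEdges_parentEdges (hG : G.IsTree) {v : V} (hv : v ∈ S)
    (hv₀ : G.dist r v ≠ 0) : ¬ (G.deleteEdges (parentEdges G r S)).Reachable r v := by
  intro hrv
  obtain ⟨n, hn⟩ := Nat.exists_eq_succ_of_ne_zero hv₀
  obtain ⟨u, hadj, hu⟩ := exists_adj_dist_eq_of_dist_eq_succ hG.connected hn
  have hbridge : ¬ (G.deleteEdges {s(u, v)}).Reachable u v :=
    isBridge_iff.mp (isAcyclic_iff_forall_adj_isBridge.mp hG.isAcyclic hadj)
  have hle : G.deleteEdges (parentEdges G r S) ≤ G.deleteEdges {s(u, v)} :=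
    deleteEdges_anti (Set.singleton_subset_iff.mpr ⟨v, hv, u, hadj, by omega, rfl⟩)
  exact hbridge <| (reachable_deleteEdges_of_dist_lt hG.connected (by omega)).symm.trans
    (hrv.mono hle)

lemma mem_burnSet_of_reachable_deleteEdges_parentEdges (hG : G.Connected) {s : ℕ → Set V}
    {k : ℕ} (hprot : ∀ n, protSet s n ⊆ S)
    (hS : ∀ v ∈ S, ¬ (G.deleteEdges (parentEdges G r S)).Reachable r v) :
    ∀ (n : ℕ) (v : V), (G.deleteEdges (parentEdges G r S)).Reachable r v → G.dist r v = n →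
      v ∈ burnSet G (ball G r k) s (n - k)
  | 0, v, _, hd => by simp [burnSet, ball, hd]
  | n + 1, v, hrv, hd => by
      rcases Nat.lt_or_ge n k with hnk | hnk
      · rw [Nat.sub_eq_zero_of_le hnk]
        exact (show G.dist r v ≤ k by omega)
      have hvS : v ∉ S := fun hv => hS v hv hrv
      obtain ⟨u, hadj, hu⟩ := exists_adj_dist_eq_of_dist_eq_succ hG hd
      have hadj' : (G.deleteEdges (parentEdges G r S)).Adj u v :=
        deleteEdges_adj.mpr ⟨hadj, fun he => hvS (mem_of_mk_mem_parentEdges he (by omega))⟩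
      have hub := mem_burnSet_of_reachable_deleteEdges_parentEdges (k := k) hG hprot hS n u
        (hrv.trans hadj'.symm.reachable) hu
      rw [show n + 1 - k = n - k + 1 by omega]
      exact Or.inr ⟨fun hvp => hvS (hprot _ hvp), u, hub, hadj⟩

end ParentEdges

end Firefight

theorem stmt_18_general {V : Type*} (T : SimpleGraph V)
    (ht : T.IsTree) (r : V) (f : ℕ → ℕ) (k : ℕ) (V' : Finset V) (s : ℕ → Set V)
    (hval : ValidStrategy T f (ball T r k) s)
    (hcont : ContainsFire T (ball T r k) s)
    (hsub : ∀ n, s n ⊆ (V' : Set V))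
    (hall : ∀ v ∈ V', ∃ m, v ∈ s m ∧ v ∉ ball T r (k + m)) :
    IsCutset T r {e : Sym2 V | ∃ v ∈ V', ∃ u : V,
      T.Adj u v ∧ T.dist r u + 1 = T.dist r v ∧ e = Sym2.mk u v} ∧
    ∀ n : ℕ, ((V' : Set V) ∩ {v | T.dist r v = n}).ncard ≤
      ∑ i ∈ Finset.Icc 1 (n - k), f i := by
  have hfar : ∀ v ∈ V', ∃ m, v ∈ s m ∧ k + m < T.dist r v := fun v hv => by
    simpa [ball] using hall v hv
  have hprot : ∀ n, protSet s n ⊆ V' := fun n v hv => by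
    obtain ⟨m, -, hm⟩ := mem_protSet.mp hv
    exact hsub m hm
  have hcut : ∀ v ∈ (V' : Set V), ¬ (T.deleteEdges (parentEdges T r V')).Reachable r v :=
    fun v hv => by
      obtain ⟨m, -, hm⟩ := hfar v hv
      exact not_reachable_deleteEdges_parentEdges ht hv (by omega)
  refine ⟨⟨parentEdges_subset_edgeSet, hcont.subset fun v hv => Set.mem_iUnion.mpr
    ⟨_, mem_burnSet_of_reachable_deleteEdges_parentEdges ht.connected hprot hcut _ v hv rfl⟩⟩,
    fun n => ?_⟩
  have hlevel : (V' : Set V) ∩ {v | T.dist r v = n} ⊆ protSet s (n - k) := by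
    rintro v ⟨hv, rfl⟩
    obtain ⟨m, hm, hmk⟩ := hfar v hv
    exact mem_protSet.mpr ⟨m, by omega, hm⟩
  calc _ ≤ (protSet s (n - k)).ncard :=
        Set.ncard_le_ncard hlevel (finite_protSet (fun n => (hval n).1) _)
    _ ≤ ∑ i ∈ Finset.Icc 1 (n - k), f i := ncard_protSet_le hval _

/-- if `s` is a successful containment strategy for the initial fire
`B_r(k)` on a tree, protecting exactly the vertices of a finite set `V'`, each of which is
protected before the (unimpeded) fire would reach it, then the set of parent edges of
vertices of `V'` is a cutset separating `r` from infinity, and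
`|{v ∈ V' : |v| = n}| ≤ ∑_{i=1}^{n-k} f i` for every `n`. -/
theorem stmt_18 {V : Type*} (T : SimpleGraph V) [Infinite V] (hlf : T.LocallyFinite)
    (ht : T.IsTree) (r : V) (f : ℕ → ℕ) (k : ℕ) (V' : Finset V) (s : ℕ → Set V)
    (hval : ValidStrategy T f (ball T r k) s)
    (hcont : ContainsFire T (ball T r k) s)
    (hsub : ∀ n, s n ⊆ (V' : Set V))
    (hall : ∀ v ∈ V', ∃ m, v ∈ s m ∧ v ∉ ball T r (k + m)) :
    IsCutset T r {e : Sym2 V | ∃ v ∈ V', ∃ u : V,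
      T.Adj u v ∧ T.dist r u + 1 = T.dist r v ∧ e = Sym2.mk u v} ∧
    ∀ n : ℕ, ((V' : Set V) ∩ {v | T.dist r v = n}).ncard ≤
      ∑ i ∈ Finset.Icc 1 (n - k), f i :=
  stmt_18_general T ht r f k V' s hval hcont hsub hall
end
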